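/- arXiv:1711.01924 — 3 statements merged into one kernel-verified Lean document; each statement's English description precedes it below -/
import Mathlib

section
/- The number of sequences a_1, ..., a_s of positive integers with a_1 = 1, a_s = t, and consecutive differences in {1, 0, -1}, equals the sum over i from 0 to floor((s-t)/2) of (t/(t+i)) * binomial(s-1, s-t-2i) * binomial(t+2i-1, i). -/
/-- `D1 s t`: number of sequences `a_1,...,a_s` of positive integers with
`a_1 = 1`, `a_s = t`, and consecutive differences in `{1,0,-1}`. -/
noncomputable def D1 (s t : ℕ) : ℕ :=
  Nat.card {a : Fin s → ℕ //
    (∀ i : Fin s, (i : ℕ) = 0 → a i = 1) ∧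
    (∀ i : Fin s, (i : ℕ) = s - 1 → a i = t) ∧
    (∀ i, 1 ≤ a i) ∧
    (∀ i j : Fin s, (j : ℕ) = (i : ℕ) + 1 →
      a j = a i + 1 ∨ a j = a i ∨ a i = a j + 1)}

/-! Writing `n = s - 1` for the number of steps, deleting the last vertex gives the Motzkin-type
recurrence `D(n+1, t+1) = D(n, t) + D(n, t+1) + D(n, t+2)`, with `D(n, 0) = 0`. On the other
side, `C(n, n-t+1-2i) = C(n, t-1+2i)` chooses the `t-1+2i` non-flat steps, and the ballot number
`B(t, i) = t/(t+i) C(t+2i-1, i)` counts the ±1 paths on them. Pascal's rule together with the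
ballot recurrence `B(t, i+1) = B(t-1, i+1) + B(t+1, i)` shows that the sum satisfies the same
recurrence. -/

def UnitStep (x y : ℕ) : Prop := y = x + 1 ∨ y = x ∨ x = y + 1

structure IsMotzkinPath (n t : ℕ) (a : Fin (n + 1) → ℕ) : Prop where
  start : a 0 = 1
  finish : a (Fin.last n) = t
  pos : ∀ i, 1 ≤ a i
  step : ∀ i : Fin n, UnitStep (a i.castSucc) (a i.succ)

def motzkinPathCount : ℕ → ℕ → ℕ
  | 0, t => if t = 1 then 1 else 0
  | _ + 1, 0 => 0
  | n + 1, t + 1 => motzkinPathCount n t + motzkinPathCount n (t + 1) + motzkinPathCount n (t + 2)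

namespace IsMotzkinPath

variable {n t u : ℕ}

theorem finish_pos {a : Fin (n + 1) → ℕ} (h : IsMotzkinPath n t a) : 1 ≤ t :=
  h.finish ▸ h.pos _

theorem init {a : Fin (n + 2) → ℕ} (h : IsMotzkinPath (n + 1) t a) :
    IsMotzkinPath n (a (Fin.last n).castSucc) (Fin.init a) where
  start := h.start
  finish := rfl
  pos _ := h.pos _
  step i := by simpa only [Fin.init, Fin.succ_castSucc] using h.step i.castSucc

theorem step_last {a : Fin (n + 2) → ℕ} (h : IsMotzkinPath (n + 1) t a) :
    UnitStep (a (Fin.last n).castSucc) t := by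
  simpa only [Fin.succ_last, h.finish] using h.step (Fin.last n)

theorem snoc {b : Fin (n + 1) → ℕ} (h : IsMotzkinPath n u b) (ht : 1 ≤ t)
    (hut : UnitStep u t) :
    IsMotzkinPath (n + 1) t (Fin.snoc b t) where
  start := by simpa only [← Fin.castSucc_zero, Fin.snoc_castSucc] using h.start
  finish := Fin.snoc_last _ _
  pos i := by
    cases i using Fin.lastCases with
    | last => simpa only [Fin.snoc_last] using ht
    | cast j => simpa only [Fin.snoc_castSucc] using h.pos j
  step i := by
    cases i using Fin.lastCases with
    | last => simpa only [Fin.succ_last, Fin.snoc_last, Fin.snoc_castSucc, h.finish] using hut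
    | cast j =>
      simpa only [Fin.succ_castSucc, Fin.snoc_castSucc] using h.step j

end IsMotzkinPath

-- Each of `t`, `t + 1`, `t + 2` is one unit step from `t + 1 ≥ 1`, so no case `t = 0` arises.
def isMotzkinPathSuccEquiv (n t : ℕ) :
    {a // IsMotzkinPath (n + 1) (t + 1) a} ≃
      {b // IsMotzkinPath n t b ∨ IsMotzkinPath n (t + 1) b ∨ IsMotzkinPath n (t + 2) b} where
  toFun a := ⟨Fin.init a.1, by
    have hstep := a.2.step_last
    have hinit := a.2.init
    obtain h | h | h : a.1 (Fin.last n).castSucc = t ∨ a.1 (Fin.last n).castSucc = t + 1 ∨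
        a.1 (Fin.last n).castSucc = t + 2 := by unfold UnitStep at hstep; omega
    all_goals rw [h] at hinit; simp only [hinit, true_or, or_true]⟩
  invFun b := ⟨Fin.snoc b.1 (t + 1), by
    rcases b.2 with h | h | h <;> exact h.snoc (Nat.le_add_left 1 t) (by unfold UnitStep; omega)⟩
  left_inv a := Subtype.ext <| by
    simpa only [a.2.finish] using Fin.snoc_init_self a.1
  right_inv b := Subtype.ext (Fin.init_snoc (α := fun _ => ℕ) _ _)

theorem isMotzkinPath_disjoint {n t u : ℕ} (h : t ≠ u) :
    Disjoint (IsMotzkinPath n t) (IsMotzkinPath n u) := by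
  simp only [Pi.disjoint_iff, Prop.disjoint_iff, not_and]
  exact fun a ht hu => h (ht.finish.symm.trans hu.finish)

open Classical in
noncomputable def isMotzkinPathSuccEquivSum (n t : ℕ) :
    {a // IsMotzkinPath (n + 1) (t + 1) a} ≃
      {b // IsMotzkinPath n t b} ⊕ {b // IsMotzkinPath n (t + 1) b} ⊕
        {b // IsMotzkinPath n (t + 2) b} :=
  (isMotzkinPathSuccEquiv n t).trans <|
    (subtypeOrEquiv _ _ <| Disjoint.sup_right (isMotzkinPath_disjoint (by omega))
      (isMotzkinPath_disjoint (by omega))).trans <|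
    Equiv.sumCongr (Equiv.refl _) (subtypeOrEquiv _ _ (isMotzkinPath_disjoint (by omega)))

-- Counting with cardinals, `mk_sum` needs no finiteness of the summands.
open Cardinal in
theorem mk_isMotzkinPath (n t : ℕ) : #{a // IsMotzkinPath n t a} = motzkinPathCount n t := by
  induction n generalizing t with
  | zero =>
    by_cases ht : t = 1
    · subst ht
      have : Unique {a // IsMotzkinPath 0 1 a} :=
        { default := ⟨fun _ => 1, rfl, rfl, fun _ => le_rfl, Fin.elim0⟩
          uniq := fun a => Subtype.ext <| funext fun i => by
            rw [Fin.fin_one_eq_zero i]; exact a.2.start }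
      simp [motzkinPathCount]
    · have : IsEmpty {a // IsMotzkinPath 0 t a} :=
        ⟨fun a => ht (a.2.finish.symm.trans a.2.start)⟩
      simp [motzkinPathCount, ht]
  | succ n ih =>
    cases t with
    | zero =>
      have : IsEmpty {a // IsMotzkinPath (n + 1) 0 a} :=
        ⟨fun a => by simpa using a.2.finish_pos⟩
      simp [motzkinPathCount]
    | succ t =>
      rw [mk_congr (isMotzkinPathSuccEquivSum n t), mk_sum, mk_sum, ih, ih, ih]
      simp [motzkinPathCount, add_assoc]

theorem D1_succ_eq_card (n t : ℕ) : D1 (n + 1) t = Nat.card {a // IsMotzkinPath n t a} := by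
  refine Nat.card_congr (Equiv.subtypeEquivRight fun a => ?_)
  constructor
  · rintro ⟨h0, hlast, hpos, hstep⟩
    exact ⟨h0 0 rfl, hlast _ (by simp), hpos, fun i => hstep _ _ (by simp)⟩
  · rintro ⟨h0, hlast, hpos, hstep⟩
    refine ⟨fun i hi => ?_, fun i hi => ?_, hpos, fun i j hij => ?_⟩
    · rwa [show i = 0 from Fin.ext hi]
    · rwa [show i = Fin.last n from Fin.ext (by simpa using hi)]
    · have hi : (i : ℕ) < n := by omega
      rw [show i = (⟨i, hi⟩ : Fin n).castSucc from rfl,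
        show j = (⟨i, hi⟩ : Fin n).succ from Fin.ext (by simp [hij])]
      exact hstep _

theorem D1_succ_eq_motzkinPathCount (n t : ℕ) : D1 (n + 1) t = motzkinPathCount n t := by
  rw [D1_succ_eq_card, Nat.card, mk_isMotzkinPath, Cardinal.toNat_natCast]

open Finset

-- The junk value `ballot 0 0 = 0 / 0 = 0` is wanted: it gives `ballotSum n 0 = 0`, matching
-- `motzkinPathCount n 0 = 0`.
noncomputable def ballot (t i : ℕ) : ℚ := t / (t + i) * (t + 2 * i - 1).choose i

@[simp]
theorem ballot_zero_left (i : ℕ) : ballot 0 i = 0 := by simp [ballot]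

theorem ballot_zero_right {t : ℕ} (ht : t ≠ 0) : ballot t 0 = 1 := by simp [ballot, ht]

theorem ballot_succ_succ (v i : ℕ) :
    ballot (v + 1) (i + 1) = ballot v (i + 1) + ballot (v + 2) i := by
  have hk : ((v + 2 * i + 1).choose (i + 1) : ℚ) =
      (v + 2 * i + 1).choose i * (v + i + 1) / (i + 1) := by
    have := Nat.choose_succ_right_eq (v + 2 * i + 1) i
    rw [show v + 2 * i + 1 - i = v + i + 1 by omega] at this
    rw [eq_div_iff (by positivity)]
    exact_mod_cast this
  simp only [ballot, show v + 1 + 2 * (i + 1) - 1 = v + 2 * i + 1 + 1 by omega,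
    show v + 2 * (i + 1) - 1 = v + 2 * i + 1 by omega,
    show v + 2 + 2 * i - 1 = v + 2 * i + 1 by omega]
  rw [Nat.choose_succ_succ' (v + 2 * i + 1) i]
  push_cast
  rw [hk]
  field_simp
  ring

noncomputable def ballotSum (n t : ℕ) : ℚ :=
  ∑ i ∈ range (n + 1), ballot t i * n.choose (t - 1 + 2 * i)

theorem ballotSum_eq_sum_range {n t m : ℕ} (hm : (n + 1 - t) / 2 < m) :
    ballotSum n t = ∑ i ∈ range m, ballot t i * n.choose (t - 1 + 2 * i) := by
  have hvanish : ∀ i ≥ (n + 1 - t) / 2 + 1, ballot t i * n.choose (t - 1 + 2 * i) = 0 :=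
    fun i hi => by rw [Nat.choose_eq_zero_of_lt (by omega), Nat.cast_zero, mul_zero]
  rw [ballotSum, eventually_constant_sum hvanish (by omega), eventually_constant_sum hvanish hm]

theorem ballotSum_eq_add_sum (n m t : ℕ) (hm : m ≤ n + 1) :
    ballotSum m t = ballot t 0 * m.choose (t - 1) +
      ∑ i ∈ range (n + 1), ballot t (i + 1) * m.choose (t + 1 + 2 * i) := by
  rw [ballotSum_eq_sum_range (m := n + 2) (by omega), sum_range_succ', add_comm]
  congr 1
  refine sum_congr rfl fun i _ => ?_
  cases t with
  | zero => simp
  | succ s => rw [show s + 1 - 1 + 2 * (i + 1) = s + 1 + 1 + 2 * i by omega]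

theorem choose_succ_eq_add_ballot_zero (n t : ℕ) :
    ((n + 1).choose t : ℚ) = n.choose t + ballot t 0 * n.choose (t - 1) := by
  cases t with
  | zero => simp
  | succ s => simp [ballot_zero_right, Nat.choose_succ_succ', add_comm]

theorem ballotSum_succ (n t : ℕ) :
    ballotSum (n + 1) (t + 1) = ballotSum n t + ballotSum n (t + 1) + ballotSum n (t + 2) := by
  have pascal (i : ℕ) : ((n + 1).choose (t + 1 + 1 + 2 * i) : ℚ) =
      n.choose (t + 1 + 2 * i) + n.choose (t + 1 + 1 + 2 * i) := by
    rw [show t + 1 + 1 + 2 * i = t + 1 + 2 * i + 1 by omega, Nat.choose_succ_succ']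
    push_cast; ring
  rw [ballotSum_eq_add_sum n (n + 1) (t + 1) le_rfl, ballotSum_eq_add_sum n n t (by omega),
    ballotSum_eq_add_sum n n (t + 1) (by omega), ballotSum, show t + 2 - 1 = t + 1 by omega,
    add_tsub_cancel_right, choose_succ_eq_add_ballot_zero, ballot_zero_right t.succ_ne_zero]
  simp only [pascal, ballot_succ_succ, mul_add, add_mul, sum_add_distrib]
  ring

@[simp]
theorem ballotSum_zero_right (n : ℕ) : ballotSum n 0 = 0 := by simp [ballotSum]

theorem ballotSum_zero_left (t : ℕ) : ballotSum 0 t = if t = 1 then 1 else 0 := by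
  rcases t with _ | _ | t <;> simp [ballotSum, ballot_zero_right]

theorem motzkinPathCount_eq_ballotSum (n t : ℕ) :
    (motzkinPathCount n t : ℚ) = ballotSum n t := by
  induction n generalizing t with
  | zero => simp [motzkinPathCount, ballotSum_zero_left]
  | succ n ih =>
    cases t with
    | zero => simp [motzkinPathCount]
    | succ t => simp [motzkinPathCount, ballotSum_succ, ih]

theorem stmt2 (s t : ℕ) (h1 : 1 ≤ t) (h2 : t ≤ s) :
    (D1 s t : ℚ) = ∑ i ∈ Finset.range ((s - t) / 2 + 1),
      (t : ℚ) / (t + i) * Nat.choose (s - 1) (s - t - 2 * i) *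
        Nat.choose (t + 2 * i - 1) i := by
  obtain ⟨n, rfl⟩ : ∃ n, s = n + 1 := ⟨s - 1, by omega⟩
  rw [D1_succ_eq_motzkinPathCount, motzkinPathCount_eq_ballotSum,
    ballotSum_eq_sum_range (m := (n + 1 - t) / 2 + 1) (Nat.lt_succ_self _)]
  refine sum_congr rfl fun i hi => ?_
  rw [mem_range] at hi
  rw [ballot, Nat.add_sub_cancel, ← Nat.choose_symm (by omega : t - 1 + 2 * i ≤ n),
    show n - (t - 1 + 2 * i) = n + 1 - t - 2 * i by omega]
  ring
end

section
/- For m ≤ n ≤ 2m, the partial sum H(n,m) = Σ_{i=1}^{m} D^1(n,i) satisfies H(n,m) = D(n,n) - Σ_{i=m}^{n-1} 3^{n-i-1} · D^1(i,m), where D(n,n) = Σ_{i=1}^{n} D^1(n,i) is computed in the n×n table (i.e., with heights allowed up to n). -/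
/-!
Summing the transfer recurrence `D¹(s+2, t) = D¹(s+1, t-1) + D¹(s+1, t) + D¹(s+1, t+1)` over the
`b` heights of a `b`-wide table gives `H_b(s+2) = 3 H_b(s+1) - D¹(s+1, 1) - D¹(s+1, b)`.
A path of length `s ≤ 2m` ending at height `1` never rises above `m`, and no path of length `s < n`
reaches height `n`; hence `x(s) = H_n(s) - H_m(s)` satisfies `x(s+1) = 3 x(s) + D¹(s, m)` for
`m ≤ s < n`, with `x(m) = 0` because a path of length `m` cannot leave the `m`-wide table.
Unrolling this recurrence from `s = m` to `s = n` gives the identity.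
-/

/-- `D1T m s t`: number of sequences `a_1,...,a_s` with `a_1 = 1`, `a_s = t`,
all entries in `{1,...,m}`, and consecutive differences in `{1,0,-1}`. -/
noncomputable def D1T (m s t : ℕ) : ℕ :=
  Nat.card {a : Fin s → ℕ //
    (∀ i : Fin s, (i : ℕ) = 0 → a i = 1) ∧
    (∀ i : Fin s, (i : ℕ) = s - 1 → a i = t) ∧
    (∀ i, 1 ≤ a i ∧ a i ≤ m) ∧
    (∀ i j : Fin s, (j : ℕ) = (i : ℕ) + 1 →
      a j = a i + 1 ∨ a j = a i ∨ a i = a j + 1)}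

open Finset

theorem Fin.apply_le_apply_zero_add {s : ℕ} {a : Fin (s + 1) → ℕ}
    (h : ∀ i : Fin s, a i.succ ≤ a i.castSucc + 1) (i : Fin (s + 1)) : a i ≤ a 0 + i := by
  induction i using Fin.induction with
  | zero => simp
  | succ i ih => have := h i; simp only [Fin.val_succ, Fin.val_castSucc] at ih ⊢; omega

theorem Fin.apply_le_apply_last_add {s : ℕ} {a : Fin (s + 1) → ℕ}
    (h : ∀ i : Fin s, a i.castSucc ≤ a i.succ + 1) (i : Fin (s + 1)) :
    a i ≤ a (Fin.last s) + (s - i) := by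
  induction i using Fin.reverseInduction with
  | last => simp
  | cast i ih => have := h i; simp only [Fin.val_succ, Fin.val_castSucc] at ih ⊢; omega

theorem eq_sum_Ico_pow_mul_of_eq_mul_add {R : Type*} [CommSemiring R] (c : R) (x f : ℕ → R)
    {m N : ℕ} (hm : x m = 0) (hx : ∀ s, m ≤ s → s < N → x (s + 1) = c * x s + f s)
    {s : ℕ} (hms : m ≤ s) (hsN : s ≤ N) :
    x s = ∑ i ∈ Ico m s, c ^ (s - i - 1) * f i := by
  induction s, hms using Nat.le_induction with
  | base => simp [hm]
  | succ s hms ih =>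
    rw [hx s hms (by omega), ih (by omega), sum_Ico_succ_top hms, mul_sum,
      show s + 1 - s - 1 = 0 by omega, pow_zero, one_mul]
    congr 1
    refine sum_congr rfl fun i hi => ?_
    rw [← mul_assoc, ← pow_succ']
    congr 2
    have := (mem_Ico.mp hi).2
    omega

theorem Finset.sum_Icc_sub_one_add_self_add_add_one {R : Type*} [CommRing R] (f : ℕ → R) (b : ℕ) :
    ∑ t ∈ Icc 1 b, (f (t - 1) + f t + f (t + 1)) =
      3 * ∑ t ∈ Icc 1 b, f t - f 1 - f b + f 0 + f (b + 1) := by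
  induction b with
  | zero => simp
  | succ b ih =>
    rw [sum_Icc_succ_top (by omega), sum_Icc_succ_top (by omega), ih, Nat.add_sub_cancel]
    ring

def pathSet (m s t : ℕ) : Set (Fin s → ℕ) :=
  {a | (∀ i : Fin s, (i : ℕ) = 0 → a i = 1) ∧
    (∀ i : Fin s, (i : ℕ) = s - 1 → a i = t) ∧
    (∀ i, 1 ≤ a i ∧ a i ≤ m) ∧
    (∀ i j : Fin s, (j : ℕ) = (i : ℕ) + 1 →
      a j = a i + 1 ∨ a j = a i ∨ a i = a j + 1)}

theorem D1T_eq_ncard (m s t : ℕ) : D1T m s t = (pathSet m s t).ncard :=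
  Nat.card_coe_set_eq _

instance (m s t : ℕ) : Finite (pathSet m s t) :=
  (Set.Finite.pi' fun _ => Set.finite_Iic m).subset fun _ ha i => (ha.2.2.1 i).2

theorem mem_pathSet_succ {m s t : ℕ} {a : Fin (s + 1) → ℕ} :
    a ∈ pathSet m (s + 1) t ↔ a 0 = 1 ∧ a (Fin.last s) = t ∧ (∀ i, 1 ≤ a i ∧ a i ≤ m) ∧
      ∀ i : Fin s, a i.succ ≤ a i.castSucc + 1 ∧ a i.castSucc ≤ a i.succ + 1 := by
  constructor
  · rintro ⟨h0, hlast, hbd, hstep⟩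
    refine ⟨h0 0 rfl, hlast _ (by simp), hbd, fun i => ?_⟩
    have := hstep i.castSucc i.succ (by simp)
    omega
  · rintro ⟨h0, hlast, hbd, hstep⟩
    refine ⟨fun i hi => ?_, fun i hi => ?_, hbd, fun i j hij => ?_⟩
    · rwa [show i = 0 from Fin.ext hi]
    · rwa [show i = Fin.last s from Fin.ext (by simpa using hi)]
    · obtain ⟨k, rfl, rfl⟩ : ∃ k : Fin s, i = k.castSucc ∧ j = k.succ :=
        ⟨⟨i, by omega⟩, rfl, Fin.ext (by simp [hij])⟩
      have := hstep k
      omega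

theorem apply_le_of_mem_pathSet {m s t : ℕ} {a : Fin (s + 1) → ℕ}
    (ha : a ∈ pathSet m (s + 1) t) (i : Fin (s + 1)) : a i ≤ i + 1 ∧ a i ≤ t + (s - i) := by
  obtain ⟨h0, hlast, -, hstep⟩ := mem_pathSet_succ.mp ha
  have := Fin.apply_le_apply_zero_add (fun i => (hstep i).1) i
  have := Fin.apply_le_apply_last_add (fun i => (hstep i).2) i
  omega

theorem pathSet_succ_eq_empty {m s t : ℕ} (ht : t = 0 ∨ m < t ∨ s + 1 < t) :
    pathSet m (s + 1) t = ∅ := by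
  refine Set.eq_empty_of_forall_notMem fun a ha => ?_
  obtain ⟨-, hlast, hbd, -⟩ := mem_pathSet_succ.mp ha
  have := hbd (Fin.last s)
  have := (apply_le_of_mem_pathSet ha (Fin.last s)).1
  simp only [Fin.val_last] at this
  omega

theorem D1T_succ_eq_zero {m s t : ℕ} (ht : t = 0 ∨ m < t ∨ s + 1 < t) : D1T m (s + 1) t = 0 := by
  rw [D1T_eq_ncard, pathSet_succ_eq_empty ht, Set.ncard_empty]

theorem pathSet_eq_of_forall_apply_le {m n s t : ℕ} (hmn : m ≤ n)
    (h : ∀ a ∈ pathSet n s t, ∀ i, a i ≤ m) : pathSet n s t = pathSet m s t := by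
  ext a
  constructor
  · intro ha
    obtain ⟨h0, hlast, hbd, hstep⟩ := ha
    exact ⟨h0, hlast, fun i => ⟨(hbd i).1, h a ⟨h0, hlast, hbd, hstep⟩ i⟩, hstep⟩
  · rintro ⟨h0, hlast, hbd, hstep⟩
    exact ⟨h0, hlast, fun i => ⟨(hbd i).1, (hbd i).2.trans hmn⟩, hstep⟩

theorem D1T_succ_eq_of_le {m n s : ℕ} (t : ℕ) (hs : s + 1 ≤ m) (hmn : m ≤ n) :
    D1T n (s + 1) t = D1T m (s + 1) t := by
  rw [D1T_eq_ncard, D1T_eq_ncard, pathSet_eq_of_forall_apply_le hmn fun a ha i => ?_]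
  have := (apply_le_of_mem_pathSet ha i).1
  omega

theorem D1T_succ_one_eq_of_le {m n s : ℕ} (hs : s + 1 ≤ 2 * m) (hmn : m ≤ n) :
    D1T n (s + 1) 1 = D1T m (s + 1) 1 := by
  rw [D1T_eq_ncard, D1T_eq_ncard, pathSet_eq_of_forall_apply_le hmn fun a ha i => ?_]
  have := apply_le_of_mem_pathSet ha i
  omega

theorem snoc_mem_pathSet_iff {m s t : ℕ} {b : Fin (s + 1) → ℕ} :
    Fin.snoc (α := fun _ => ℕ) b t ∈ pathSet m (s + 2) t ↔
      1 ≤ t ∧ t ≤ m ∧ b ∈ pathSet m (s + 1) (b (Fin.last s)) ∧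
        t ≤ b (Fin.last s) + 1 ∧ b (Fin.last s) ≤ t + 1 := by
  have h0 : Fin.snoc (α := fun _ => ℕ) b t 0 = b 0 := Fin.snoc_castSucc (i := 0) ..
  simp only [mem_pathSet_succ, Fin.forall_fin_succ' (n := s + 1), Fin.forall_fin_succ' (n := s),
    h0, Fin.snoc_castSucc, Fin.snoc_last, Fin.succ_last, Fin.succ_castSucc, true_and]
  tauto

theorem pathSet_add_two {m s t : ℕ} (ht : 1 ≤ t) (htm : t ≤ m) :
    pathSet m (s + 2) t = (fun b => Fin.snoc (α := fun _ => ℕ) b t) ''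
      (pathSet m (s + 1) (t - 1) ∪ pathSet m (s + 1) t ∪ pathSet m (s + 1) (t + 1)) := by
  ext a
  obtain ⟨b, u, rfl⟩ : ∃ b u, Fin.snoc (α := fun _ => ℕ) b u = a :=
    ⟨Fin.init a, a (Fin.last _), Fin.snoc_init_self a⟩
  constructor
  · intro ha
    obtain rfl : u = t := by simpa using (mem_pathSet_succ.mp ha).2.1
    obtain ⟨-, -, hb, hstep⟩ := snoc_mem_pathSet_iff.mp ha
    refine ⟨b, ?_, rfl⟩
    obtain h | h | h : b (Fin.last s) = u - 1 ∨ b (Fin.last s) = u ∨ b (Fin.last s) = u + 1 := by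
      omega
    all_goals rw [h] at hb; simp [hb]
  · rintro ⟨b', hb', hsnoc⟩
    rw [← hsnoc]
    refine snoc_mem_pathSet_iff.mpr ⟨ht, htm, ?_⟩
    rcases hb' with (hb' | hb') | hb' <;>
      rw [(mem_pathSet_succ.mp hb').2.1] <;> exact ⟨hb', by omega⟩

theorem D1T_add_two {m s t : ℕ} (ht : 1 ≤ t) (htm : t ≤ m) :
    D1T m (s + 2) t = D1T m (s + 1) (t - 1) + D1T m (s + 1) t + D1T m (s + 1) (t + 1) := by
  have hdisj {u v : ℕ} (huv : u ≠ v) : Disjoint (pathSet m (s + 1) u) (pathSet m (s + 1) v) :=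
    Set.disjoint_left.mpr fun b hu hv =>
      huv ((mem_pathSet_succ.mp hu).2.1.symm.trans (mem_pathSet_succ.mp hv).2.1)
  simp only [D1T_eq_ncard, pathSet_add_two ht htm]
  rw [Set.ncard_image_of_injective _ fun b c h => by simpa using congrArg Fin.init h,
    Set.ncard_union_eq (Set.disjoint_union_left.mpr ⟨hdisj (by omega), hdisj (by omega)⟩),
    Set.ncard_union_eq (hdisj (by omega))]

theorem sum_D1T_add_two (b s : ℕ) :
    ∑ t ∈ Icc 1 b, (D1T b (s + 2) t : ℤ) =
      3 * ∑ t ∈ Icc 1 b, (D1T b (s + 1) t : ℤ) - D1T b (s + 1) 1 - D1T b (s + 1) b := by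
  rw [sum_congr rfl fun t ht => by
      rw [D1T_add_two (mem_Icc.mp ht).1 (mem_Icc.mp ht).2, Nat.cast_add, Nat.cast_add],
    sum_Icc_sub_one_add_self_add_add_one (fun t => (D1T b (s + 1) t : ℤ)),
    D1T_succ_eq_zero (.inl rfl), D1T_succ_eq_zero (.inr (.inl b.lt_add_one))]
  simp

theorem sum_Icc_D1T_succ_eq {n s : ℕ} (hsn : s + 1 ≤ n) :
    ∑ t ∈ Icc 1 n, (D1T n (s + 1) t : ℤ) = ∑ t ∈ Icc 1 (s + 1), (D1T (s + 1) (s + 1) t : ℤ) := by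
  rw [← sum_subset (Icc_subset_Icc_right hsn) fun t ht hts => ?_]
  · exact sum_congr rfl fun t _ => by rw [D1T_succ_eq_of_le t le_rfl hsn]
  · rw [D1T_succ_eq_zero (.inr (.inr (by simp_all)))]
    simp

theorem sum_D1T_sub_sum_D1T_add_two {m n s : ℕ} (hmn : m ≤ n) (hsn : s + 1 < n)
    (hn : n ≤ 2 * m) :
    ∑ t ∈ Icc 1 n, (D1T n (s + 2) t : ℤ) - ∑ t ∈ Icc 1 m, (D1T m (s + 2) t : ℤ) =
      3 * (∑ t ∈ Icc 1 n, (D1T n (s + 1) t : ℤ) - ∑ t ∈ Icc 1 m, (D1T m (s + 1) t : ℤ)) +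
        D1T m (s + 1) m := by
  rw [sum_D1T_add_two, sum_D1T_add_two, D1T_succ_one_eq_of_le (by omega) hmn,
    D1T_succ_eq_zero (.inr (.inr hsn))]
  ring

theorem stmt4 (m n : ℕ) (h1 : 1 ≤ m) (h2 : m ≤ n) (h3 : n ≤ 2 * m) :
    (∑ i ∈ Finset.Icc 1 m, (D1T m n i : ℤ)) =
      (∑ i ∈ Finset.Icc 1 n, (D1T n n i : ℤ)) -
        ∑ i ∈ Finset.Icc m (n - 1), 3 ^ (n - i - 1) * (D1T m i m : ℤ) := by
  set x : ℕ → ℤ := fun s =>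
    ∑ t ∈ Icc 1 n, (D1T n s t : ℤ) - ∑ t ∈ Icc 1 m, (D1T m s t : ℤ)
  have hxm : x m = 0 := by
    obtain ⟨k, rfl⟩ := Nat.exists_eq_add_of_le' h1
    exact sub_eq_zero_of_eq (sum_Icc_D1T_succ_eq h2)
  have hrec (s : ℕ) (hms : m ≤ s) (hsn : s < n) : x (s + 1) = 3 * x s + D1T m s m := by
    obtain ⟨k, rfl⟩ := Nat.exists_eq_add_of_le' (h1.trans hms)
    exact sum_D1T_sub_sum_D1T_add_two h2 hsn h3
  have hsol := eq_sum_Ico_pow_mul_of_eq_mul_add 3 x (fun s => (D1T m s m : ℤ)) hxm hrec h2 le_rfl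
  rw [← Icc_sub_one_right_eq_Ico_of_not_isMin (by simpa using (by omega : n ≠ 0))] at hsol
  linarith
end

section
/- For odd n = 2k-1, the total number of perfect lattice paths in the m×n table satisfies I_m(n) = Σ_{i=1}^{m} D(k,i)^2. -/
/-- `Dm m s t`: number of sequences `a_1,...,a_s` with arbitrary first entry,
`a_s = t`, all entries in `{1,...,m}`, and consecutive differences in `{1,0,-1}`. -/
noncomputable def Dm (m s t : ℕ) : ℕ :=
  Nat.card {a : Fin s → ℕ //
    (∀ i : Fin s, (i : ℕ) = s - 1 → a i = t) ∧
    (∀ i, 1 ≤ a i ∧ a i ≤ m) ∧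
    (∀ i j : Fin s, (j : ℕ) = (i : ℕ) + 1 →
      a j = a i + 1 ∨ a j = a i ∨ a i = a j + 1)}
/-- `Itab m n`: number of sequences `a_1,...,a_n` with all entries in `{1,...,m}`
and consecutive differences in `{1,0,-1}` (perfect lattice paths). -/
noncomputable def Itab (m n : ℕ) : ℕ :=
  Nat.card {a : Fin n → ℕ //
    (∀ i, 1 ≤ a i ∧ a i ≤ m) ∧
    (∀ i j : Fin n, (j : ℕ) = (i : ℕ) + 1 →
      a j = a i + 1 ∨ a j = a i ∨ a i = a j + 1)}

/-!
Cutting a path of length `2k - 1` at its middle entry `t` leaves two paths of length `k` ending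
at `t`, the second one read backwards, which is again a path because the step relation is
symmetric. Conversely, two such paths glue back together, so the paths with middle entry `t`
are counted by `D(k, t)^2`, and summing over `t` gives the formula.
-/

theorem Nat.card_subtype_eq_sum_card_fiber {α β : Type*} {P : α → Prop} [Finite {a // P a}]
    (f : α → β) (s : Finset β) (hf : ∀ a, P a → f a ∈ s) :
    Nat.card {a // P a} = ∑ b ∈ s, Nat.card {a // P a ∧ f a = b} := by
  let g : {a // P a} → s := fun a => ⟨f a, hf a a.2⟩
  rw [← Nat.card_congr (Equiv.sigmaFiberEquiv g), Nat.card_sigma, ← Finset.sum_coe_sort s]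
  refine Fintype.sum_congr _ _ fun b => Nat.card_congr ?_
  exact (Equiv.subtypeEquivRight fun _ => Subtype.ext_iff).trans
    (Equiv.subtypeSubtypeEquivSubtypeInter P (f · = b))

def LatticeStep (x y : ℕ) : Prop := y = x + 1 ∨ y = x ∨ x = y + 1

theorem LatticeStep.symm {x y : ℕ} (h : LatticeStep x y) : LatticeStep y x := by
  unfold LatticeStep at *; omega

def IsLatticePath (m : ℕ) {s : ℕ} (a : Fin s → ℕ) : Prop :=
  (∀ i, 1 ≤ a i ∧ a i ≤ m) ∧ ∀ i j : Fin s, (j : ℕ) = i + 1 → LatticeStep (a i) (a j)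

instance (m s : ℕ) : Finite {a : Fin s → ℕ // IsLatticePath m a} :=
  Finite.of_injective (fun a i => (⟨a.1 i, Nat.lt_succ_of_le (a.2.1 i).2⟩ : Fin (m + 1)))
    fun _ _ hab => Subtype.ext <| funext fun i => congrArg Fin.val (congrFun hab i)

namespace IsLatticePath

variable {m s r : ℕ} {a : Fin s → ℕ}

theorem comp (h : IsLatticePath m a) (f : Fin r → Fin s)
    (hf : ∀ i j : Fin r, (j : ℕ) = i + 1 → (f j : ℕ) = f i + 1) : IsLatticePath m (a ∘ f) :=
  ⟨fun i => h.1 (f i), fun i j hij => h.2 _ _ (hf i j hij)⟩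

theorem comp_rev (h : IsLatticePath m a) : IsLatticePath m (a ∘ Fin.rev) :=
  ⟨fun i => h.1 _, fun i j hij => (h.2 _ _ (by simp only [Fin.val_rev]; omega)).symm⟩

end IsLatticePath

def pathJoin {p q : ℕ} (b : Fin (p + 1) → ℕ) (c : Fin (q + 1) → ℕ) : Fin (p + q + 1) → ℕ :=
  fun i => if h : (i : ℕ) ≤ p then b ⟨i, by omega⟩ else c ⟨i - p, by omega⟩

theorem IsLatticePath.join {m p q : ℕ} {b : Fin (p + 1) → ℕ} {c : Fin (q + 1) → ℕ}
    (hb : IsLatticePath m b) (hc : IsLatticePath m c) (hbc : b (Fin.last p) = c 0) :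
    IsLatticePath m (pathJoin b c) := by
  refine ⟨fun i => ?_, fun i j hij => ?_⟩
  · unfold pathJoin
    split_ifs
    exacts [hb.1 _, hc.1 _]
  · unfold pathJoin
    by_cases hj : (j : ℕ) ≤ p
    · rw [dif_pos hj, dif_pos (by omega)]
      exact hb.2 _ _ hij
    rw [dif_neg hj]
    by_cases hi : (i : ℕ) ≤ p
    · have hi' : (⟨i, by omega⟩ : Fin (p + 1)) = Fin.last p := Fin.ext (by simp; omega)
      rw [dif_pos hi, hi', hbc]
      exact hc.2 0 _ (by simp; omega)
    · rw [dif_neg hi]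
      exact hc.2 _ _ (by simp; omega)

def latticePathSplitEquiv (m p q t : ℕ) :
    {a : Fin (p + q + 1) → ℕ // IsLatticePath m a ∧ a ⟨p, by omega⟩ = t} ≃
      {b : Fin (p + 1) → ℕ // b (Fin.last p) = t ∧ IsLatticePath m b} ×
      {c : Fin (q + 1) → ℕ // c 0 = t ∧ IsLatticePath m c} where
  toFun a := (⟨a.1 ∘ Fin.castLE (by omega), a.2.2, a.2.1.comp _ fun _ _ h => h⟩,
    ⟨a.1 ∘ Fin.natAdd p, a.2.2, a.2.1.comp _ fun _ _ h => by simp [h]; omega⟩)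
  invFun bc := ⟨pathJoin bc.1.1 bc.2.1,
    bc.1.2.2.join bc.2.2.2 (bc.1.2.1.trans bc.2.2.1.symm), (dif_pos le_rfl).trans bc.1.2.1⟩
  left_inv a := by
    ext i
    simp only [pathJoin]
    split_ifs
    · rfl
    · exact congrArg a.1 (Fin.ext (by simp; omega))
  right_inv := by
    rintro ⟨⟨b, hbt, -⟩, ⟨c, hct, -⟩⟩
    ext i
    · exact dif_pos (Nat.lt_succ_iff.mp i.2)
    · show pathJoin b c (Fin.natAdd p i) = c i
      simp only [pathJoin, Fin.val_natAdd]
      split_ifs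
      · obtain rfl : i = 0 := Fin.ext (by rw [Fin.val_zero]; omega)
        exact hbt.trans hct.symm
      · exact congrArg c (Fin.ext (by simp))

def latticePathRevEquiv (m q t : ℕ) :
    {c : Fin (q + 1) → ℕ // c 0 = t ∧ IsLatticePath m c} ≃
      {c : Fin (q + 1) → ℕ // c (Fin.last q) = t ∧ IsLatticePath m c} where
  toFun c := ⟨c.1 ∘ Fin.rev, by simpa using c.2.1, c.2.2.comp_rev⟩
  invFun c := ⟨c.1 ∘ Fin.rev, by simpa using c.2.1, c.2.2.comp_rev⟩
  left_inv c := by ext; simp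
  right_inv c := by ext; simp

theorem Itab_eq_card (m n : ℕ) : Itab m n = Nat.card {a : Fin n → ℕ // IsLatticePath m a} := rfl

theorem Dm_succ_eq_card (m p t : ℕ) :
    Dm m (p + 1) t = Nat.card {a : Fin (p + 1) → ℕ // a (Fin.last p) = t ∧ IsLatticePath m a} :=
  Nat.card_congr <| Equiv.subtypeEquivRight fun _ =>
    and_congr_left' ⟨fun h => h _ rfl, fun h i hi => (Fin.ext hi : i = Fin.last p) ▸ h⟩

theorem stmt7 (m n k : ℕ) (hk : 1 ≤ k) (hn : n = 2 * k - 1) :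
    Itab m n = ∑ i ∈ Finset.Icc 1 m, (Dm m k i) ^ 2 := by
  obtain ⟨p, rfl⟩ : ∃ p, k = p + 1 := ⟨k - 1, by omega⟩
  obtain rfl : n = p + p + 1 := by omega
  rw [Itab_eq_card, Nat.card_subtype_eq_sum_card_fiber (· ⟨p, by omega⟩) _
    fun a ha => Finset.mem_Icc.mpr (ha.1 _)]
  refine Finset.sum_congr rfl fun t _ => ?_
  rw [Nat.card_congr ((latticePathSplitEquiv m p p t).trans
    ((Equiv.refl _).prodCongr (latticePathRevEquiv m p t))), Nat.card_prod, Dm_succ_eq_card, sq]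
end
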